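/- arXiv:2207.06038 — 2 statements merged into one kernel-verified Lean document; each statement's English description precedes it below -/
import Mathlib

section
/- Let E be a Banach lattice and A an almost L-set in E'. If (f_n) is a sequence in the solid hull Sol(A) with |f_n| → 0 in the weak* topology, then (f_n) is an L-sequence. -/
open Filter Topology

section Defs

variable {X : Type*} [NormedAddCommGroup X] [NormedSpace ℝ X]

/-- A sequence is weakly Cauchy if every continuous functional converges along it. -/
def WeaklyCauchy (x : ℕ → X) : Prop :=
  ∀ f : X →L[ℝ] ℝ, ∃ a : ℝ, Tendsto (fun n => f (x n)) atTop (𝓝 a)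

/-- A set is weakly precompact if every sequence from it has a weakly Cauchy subsequence. -/
def WeaklyPrecompact (A : Set X) : Prop :=
  ∀ x : ℕ → X, (∀ n, x n ∈ A) → ∃ φ : ℕ → ℕ, StrictMono φ ∧ WeaklyCauchy (fun n => x (φ n))

/-- A weakly null sequence. -/
def WeaklyNull (x : ℕ → X) : Prop :=
  ∀ f : X →L[ℝ] ℝ, Tendsto (fun n => f (x n)) atTop (𝓝 0)

/-- An L-set in the dual: weakly null sequences of the space converge to zero
uniformly on the set. -/
def IsLSet (B : Set (X →L[ℝ] ℝ)) : Prop :=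
  ∀ x : ℕ → X, WeaklyNull x → ∀ ε > 0, ∃ N, ∀ k ≥ N, ∀ f ∈ B, |f (x k)| ≤ ε

/-- An L-sequence in the dual. -/
def IsLSequence (f : ℕ → X →L[ℝ] ℝ) : Prop := IsLSet (Set.range f)

/-- A weak* null sequence of functionals. -/
def WeakStarNull (f : ℕ → X →L[ℝ] ℝ) : Prop :=
  ∀ x : X, Tendsto (fun n => f n x) atTop (𝓝 0)

/-- Relative weak compactness, in its (Eberlein–Šmulian) sequential form: every
sequence from the set has a subsequence converging weakly to a point of the space. -/
def RelWeaklyCompact (A : Set X) : Prop :=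
  ∀ x : ℕ → X, (∀ n, x n ∈ A) → ∃ φ : ℕ → ℕ, StrictMono φ ∧ ∃ a : X,
    ∀ f : X →L[ℝ] ℝ, Tendsto (fun n => f (x (φ n))) atTop (𝓝 (f a))

/-- A weakly precompact operator: the image of the closed unit ball is weakly precompact. -/
def WeaklyPrecompactOp {Y : Type*} [NormedAddCommGroup Y] [NormedSpace ℝ Y]
    (T : X →L[ℝ] Y) : Prop :=
  WeaklyPrecompact (T '' Metric.closedBall 0 1)

/-- A Dunford–Pettis operator maps weakly null sequences to norm null sequences. -/
def DunfordPettisOp {Y : Type*} [NormedAddCommGroup Y] [NormedSpace ℝ Y]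
    (S : X →L[ℝ] Y) : Prop :=
  ∀ x : ℕ → X, WeaklyNull x → Tendsto (fun n => ‖S (x n)‖) atTop (𝓝 0)

/-- A sequence equivalent to the unit vector basis of ℓ¹. -/
def EquivL1Basis (x : ℕ → X) : Prop :=
  ∃ c C : ℝ, 0 < c ∧ ∀ (s : Finset ℕ) (α : ℕ → ℝ),
    c * ∑ i ∈ s, |α i| ≤ ‖∑ i ∈ s, α i • x i‖ ∧
      ‖∑ i ∈ s, α i • x i‖ ≤ C * ∑ i ∈ s, |α i|

end Defs

section LatticeDefs

variable {E : Type*} [NormedAddCommGroup E] [Lattice E] [HasSolidNorm E] [IsOrderedAddMonoid E] [NormedSpace ℝ E]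

/-- The value of the modulus |f| of a functional on a positive element, via the
Riesz–Kantorovich formula: |f|(x) = sup {f y : |y| ≤ x}. -/
noncomputable def dualAbs (f : E →L[ℝ] ℝ) (x : E) : ℝ :=
  sSup ((fun y => f y) '' {y : E | |y| ≤ x})

/-- |f| ≤ |g| in the dual lattice, expressed on the positive cone. -/
def DualAbsLE (f g : E →L[ℝ] ℝ) : Prop :=
  ∀ x : E, 0 ≤ x → dualAbs f x ≤ dualAbs g x

/-- Disjointness of two functionals: (|f| ⊓ |g|)(x) = 0 for every x ≥ 0, via the
Riesz–Kantorovich formula for the infimum. -/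
def DualDisjoint (f g : E →L[ℝ] ℝ) : Prop :=
  ∀ x : E, 0 ≤ x → ∀ ε > 0, ∃ y : E, 0 ≤ y ∧ y ≤ x ∧ dualAbs f y + dualAbs g (x - y) ≤ ε

/-- An almost L-set in the dual: disjoint weakly null sequences of the space
converge to zero uniformly on the set. -/
def AlmostLSet (B : Set (E →L[ℝ] ℝ)) : Prop :=
  ∀ x : ℕ → E, (Pairwise fun m n => |x m| ⊓ |x n| = 0) → WeaklyNull x →
    ∀ ε > 0, ∃ N, ∀ k ≥ N, ∀ f ∈ B, |f (x k)| ≤ ε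

/-- The solid hull of a subset of a Banach lattice. -/
def latticeSolidHull (A : Set E) : Set E := {x : E | ∃ y ∈ A, |x| ≤ |y|}

/-- An order weakly precompact operator: order intervals are mapped to weakly
precompact sets. -/
def OrderWeaklyPrecompactOp {X : Type*} [NormedAddCommGroup X] [NormedSpace ℝ X]
    (T : E →L[ℝ] X) : Prop :=
  ∀ x : E, 0 ≤ x → WeaklyPrecompact (T '' Set.Icc (-x) x)

/-- An order weakly compact operator: order intervals are mapped to relatively
weakly compact sets. -/
def OrderWeaklyCompactOp {X : Type*} [NormedAddCommGroup X] [NormedSpace ℝ X]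
    (T : E →L[ℝ] X) : Prop :=
  ∀ x : E, 0 ≤ x → RelWeaklyCompact (T '' Set.Icc (-x) x)

/-- An AM-compact operator: order intervals are mapped to relatively norm compact sets. -/
def AMCompactOp {X : Type*} [NormedAddCommGroup X] [NormedSpace ℝ X]
    (T : E →L[ℝ] X) : Prop :=
  ∀ x : E, 0 ≤ x → IsCompact (closure (T '' Set.Icc (-x) x))

/-- Order continuity of the norm of the dual E′: every downward directed set of
positive functionals whose greatest lower bound is 0 contains functionals of
arbitrarily small norm (f_α ↓ 0 implies ‖f_α‖ → 0). -/
def DualOrderContinuousNorm (E : Type*) [NormedAddCommGroup E] [Lattice E] [HasSolidNorm E] [IsOrderedAddMonoid E]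
    [NormedSpace ℝ E] : Prop :=
  ∀ D : Set (E →L[ℝ] ℝ), D.Nonempty →
    (∀ f ∈ D, ∀ x : E, 0 ≤ x → 0 ≤ f x) →
    (∀ f ∈ D, ∀ g ∈ D, ∃ h ∈ D,
      (∀ x : E, 0 ≤ x → h x ≤ f x) ∧ (∀ x : E, 0 ≤ x → h x ≤ g x)) →
    (∀ g : E →L[ℝ] ℝ, (∀ f ∈ D, ∀ x : E, 0 ≤ x → g x ≤ f x) →
      ∀ x : E, 0 ≤ x → g x ≤ 0) →
    ∀ ε > 0, ∃ f ∈ D, ‖f‖ ≤ ε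

/-- σ-Dedekind completeness: every order bounded sequence has a supremum. -/
def SigmaDedekindComplete (E : Type*) [NormedAddCommGroup E] [Lattice E] [HasSolidNorm E] [IsOrderedAddMonoid E] : Prop :=
  ∀ f : ℕ → E, BddAbove (Set.range f) → ∃ s, IsLUB (Set.range f) s

end LatticeDefs

/-!
Fix a weakly null sequence `(xₖ)` and `ε > 0`, and pick `gₙ ∈ A` with `|fₙ| ≤ |gₙ|`. If some
`u ≥ 0` makes every `|gₙ|((|xₖ| - u)⁺)` small, then
`|fₙ(xₖ)| ≤ |fₙ|((|xₖ| - u)⁺) + |fₙ|(u)` is small for all large `n` because `|fₙ| → 0` weak*,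
and for the finitely many remaining `n` because `(xₖ)` is weakly null.

Otherwise the classical disjointification yields disjoint `yⱼ` with `|yⱼ| ≤ |x_{κ j}|` and
`g_{ν j}(yⱼ) > ε / 4`. A disjoint sequence dominated by a weakly null sequence is weakly null:
were `|h|(|yⱼ|) ≥ η` along a subsequence, a diagonal extraction would make the components of `h`
on the bands of the `yⱼ`, signed like `x_{κ j}`, sum to a functional that stays `≥ η / 2` on
`x_{κ j}`. So `(yⱼ)` is a disjoint weakly null sequence on which `A` does not converge uniformly.
-/

section LatticeOrderedGroup

variable {α : Type*} [AddCommGroup α] [Lattice α] {a b c x : α}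

lemma inf_eq_zero_of_le_of_le {p q : α} (hp : 0 ≤ p) (hq : 0 ≤ q) (hpa : p ≤ a) (hqb : q ≤ b)
    (hab : a ⊓ b = 0) : p ⊓ q = 0 :=
  le_antisymm ((inf_le_inf hpa hqb).trans_eq hab) (le_inf hp hq)

variable [IsOrderedAddMonoid α]

lemma add_inf_le_inf_add_inf (ha : 0 ≤ a) (hb : 0 ≤ b) (hc : 0 ≤ c) :
    (a + b) ⊓ c ≤ a ⊓ c + b ⊓ c := by
  have hle_a : (a + b) ⊓ c - b ⊓ c ≤ a := by
    simpa [abs_of_nonneg ha] using (le_abs_self _).trans (abs_inf_sub_inf_le_abs (a + b) b c)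
  have hle_c : (a + b) ⊓ c - b ⊓ c ≤ c := (sub_le_self _ (le_inf hb hc)).trans inf_le_right
  exact sub_le_iff_le_add.1 (le_inf hle_a hle_c)

lemma add_inf_eq_zero (ha : 0 ≤ a) (hb : 0 ≤ b) (hc : 0 ≤ c) (hac : a ⊓ c = 0)
    (hbc : b ⊓ c = 0) : (a + b) ⊓ c = 0 :=
  le_antisymm (by simpa [hac, hbc] using add_inf_le_inf_add_inf ha hb hc)
    (le_inf (add_nonneg ha hb) hc)

lemma nsmul_inf_eq_zero (n : ℕ) (ha : 0 ≤ a) (hb : 0 ≤ b) (h : a ⊓ b = 0) : (n • a) ⊓ b = 0 := by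
  induction n with
  | zero => simpa using hb
  | succ n ih => rw [succ_nsmul]; exact add_inf_eq_zero (nsmul_nonneg ha n) ha hb ih h

lemma nsmul_inf_nsmul_eq_zero (m n : ℕ) (ha : 0 ≤ a) (hb : 0 ≤ b) (h : a ⊓ b = 0) :
    (m • a) ⊓ (n • b) = 0 := by
  rw [inf_comm]
  exact nsmul_inf_eq_zero n hb (nsmul_nonneg ha m)
    (by rw [inf_comm]; exact nsmul_inf_eq_zero m ha hb h)

lemma add_eq_sup_of_inf_eq_zero (h : a ⊓ b = 0) : a + b = a ⊔ b := by
  rw [← inf_add_sup a b, h, zero_add]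

lemma inf_add_eq_inf_add_inf (hx : 0 ≤ x) (ha : 0 ≤ a) (hb : 0 ≤ b) (hab : a ⊓ b = 0) :
    x ⊓ (a + b) = x ⊓ a + x ⊓ b := by
  refine le_antisymm ?_ ?_
  · simpa only [inf_comm x] using add_inf_le_inf_add_inf ha hb hx
  · have hdisj : (x ⊓ a) ⊓ (x ⊓ b) = 0 :=
      inf_eq_zero_of_le_of_le (le_inf hx ha) (le_inf hx hb) inf_le_right inf_le_right hab
    rw [add_eq_sup_of_inf_eq_zero hdisj]
    exact sup_le (inf_le_inf_left x (le_add_of_nonneg_right hb))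
      (inf_le_inf_left x (le_add_of_nonneg_left ha))

lemma inf_posPart_add_inf_negPart (hx : 0 ≤ x) (hxa : x ≤ |a|) : x ⊓ a⁺ + x ⊓ a⁻ = x := by
  rw [← inf_add_eq_inf_add_inf hx (posPart_nonneg a) (negPart_nonneg a)
    (posPart_inf_negPart_eq_zero a), posPart_add_negPart, inf_eq_left.2 hxa]

lemma Finset.sum_inf_eq_zero {ι : Type*} (s : Finset ι) {f : ι → α} (hf : ∀ i ∈ s, 0 ≤ f i)
    (hb : 0 ≤ b) (h : ∀ i ∈ s, f i ⊓ b = 0) : (∑ i ∈ s, f i) ⊓ b = 0 := by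
  induction s using Finset.cons_induction with
  | empty => simpa using hb
  | cons i s hi ih =>
    simp only [Finset.mem_cons, forall_eq_or_imp] at hf h
    rw [Finset.sum_cons]
    exact add_inf_eq_zero hf.1 (Finset.sum_nonneg hf.2) hb h.1 (ih hf.2 h.2)

lemma Finset.sum_le_of_pairwise_inf_eq_zero {ι : Type*} (s : Finset ι) {f : ι → α}
    (hf : ∀ i, 0 ≤ f i) (hdisj : Pairwise fun i j => f i ⊓ f j = 0) (hb : 0 ≤ b)
    (hfb : ∀ i ∈ s, f i ≤ b) : ∑ i ∈ s, f i ≤ b := by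
  induction s using Finset.cons_induction with
  | empty => simpa using hb
  | cons i s hi ih =>
    simp only [Finset.mem_cons, forall_eq_or_imp] at hfb
    have hdisj_i : (∑ j ∈ s, f j) ⊓ f i = 0 := Finset.sum_inf_eq_zero s (fun j _ => hf j) (hf i)
      fun j hj => hdisj (ne_of_mem_of_not_mem hj hi)
    rw [Finset.sum_cons, add_comm, add_eq_sup_of_inf_eq_zero hdisj_i]
    exact sup_le (ih hfb.2) hfb.1

lemma nonneg_of_nsmul_nonneg {n : ℕ} (hn : n ≠ 0) (h : 0 ≤ n • a) : 0 ≤ a := by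
  have hle : a⁻ ≤ n • a⁺ := calc
    a⁻ ≤ n • a⁻ := le_self_nsmul (negPart_nonneg a) hn
    _ ≤ n • a⁺ := by
      rwa [← posPart_sub_negPart a, nsmul_sub, sub_nonneg] at h
  have hzero : a⁻ = 0 := by
    rw [← inf_eq_left.2 hle, inf_comm]
    exact nsmul_inf_eq_zero n (posPart_nonneg a) (negPart_nonneg a) (posPart_inf_negPart_eq_zero a)
  rw [← posPart_sub_negPart a, hzero, sub_zero]
  exact posPart_nonneg a

lemma exists_eq_add_of_abs_le_add (ha : 0 ≤ a) (hb : 0 ≤ b) (h : |x| ≤ a + b) :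
    ∃ p q, x = p + q ∧ |p| ≤ a ∧ |q| ≤ b := by
  have hxu : x ≤ a + b := (le_abs_self x).trans h
  have hxl : -(a + b) ≤ x := neg_le.1 ((neg_le_abs x).trans h)
  have hq : x - (x ⊓ a) ⊔ -a = (x - a)⁺ ⊓ (x + a) := by
    rw [sub_sup, sub_neg_eq_add, inf_eq_sub_posPart_sub x a, sub_sub_cancel]
  refine ⟨(x ⊓ a) ⊔ -a, x - (x ⊓ a) ⊔ -a, by abel,
    abs_le'.2 ⟨sup_le inf_le_right (neg_le_self ha), neg_le.1 le_sup_right⟩, ?_⟩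
  rw [hq, abs_le']
  refine ⟨inf_le_left.trans (posPart_def (x - a) ▸ sup_le (sub_le_iff_le_add'.2 hxu) hb), ?_⟩
  rw [neg_le]
  exact le_inf ((neg_nonpos.2 hb).trans (posPart_nonneg _))
    (by simpa [add_comm] using add_le_add_right hxl a)

end LatticeOrderedGroup

section OrderedModule

variable {E : Type*} [AddCommGroup E] [Lattice E] [Module ℝ E] [PosSMulMono ℝ E]

lemma negPart_smul_le {c : ℝ} (hc : 0 ≤ c) (y : E) : (c • y)⁻ ≤ c • y⁻ := by
  rw [negPart_def, ← smul_neg]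
  exact sup_le (smul_le_smul_of_nonneg_left (neg_le_negPart y) hc)
    (smul_nonneg hc (negPart_nonneg y))

lemma posPart_inf_negPart_smul_eq_zero [IsOrderedAddMonoid E] {c : ℝ} (hc : 0 ≤ c) (y : E) :
    y⁺ ⊓ (c • y)⁻ = 0 := by
  have hle : (c • y)⁻ ≤ ⌈c⌉₊ • y⁻ := (negPart_smul_le hc y).trans <| by
    rw [← Nat.cast_smul_eq_nsmul ℝ]
    exact smul_le_smul_of_nonneg_right (Nat.le_ceil c) (negPart_nonneg y)
  have hdisj : y⁺ ⊓ ⌈c⌉₊ • y⁻ = 0 := by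
    rw [inf_comm]
    exact nsmul_inf_eq_zero _ (negPart_nonneg y) (posPart_nonneg y)
      (by rw [inf_comm]; exact posPart_inf_negPart_eq_zero y)
  exact inf_eq_zero_of_le_of_le (posPart_nonneg y) (negPart_nonneg _) le_rfl hle hdisj

lemma inf_eq_zero_of_le_posPart_sub [IsOrderedAddMonoid E] {p q a X : E} {t β K : ℝ} (hX : 0 ≤ X)
    (hK : 0 ≤ K) (hβ : β ≤ K * t) (hp0 : 0 ≤ p) (hq0 : 0 ≤ q) (hp : p ≤ (a - t • X)⁺)
    (hq : q ≤ (β • X - K • a)⁺) : p ⊓ q = 0 := by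
  have hq' : q ≤ (K • (a - t • X))⁻ := hq.trans <| by
    rw [← posPart_neg, smul_sub, smul_smul, neg_sub]
    exact posPart_mono (sub_le_sub_right (smul_le_smul_of_nonneg_right hβ hX) _)
  exact inf_eq_zero_of_le_of_le hp0 hq0 hp hq' (posPart_inf_negPart_smul_eq_zero hK _)

end OrderedModule

section NormedLattice

variable {E : Type*} [NormedAddCommGroup E] [Lattice E] [HasSolidNorm E] [IsOrderedAddMonoid E]

lemma norm_posPart_le (a : E) : ‖a⁺‖ ≤ ‖a‖ :=
  norm_le_norm_of_abs_le_abs <| by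
    rw [abs_of_nonneg (posPart_nonneg a), ← posPart_add_negPart]
    exact le_add_of_nonneg_right (negPart_nonneg a)

lemma norm_negPart_le (a : E) : ‖a⁻‖ ≤ ‖a‖ :=
  norm_le_norm_of_abs_le_abs <| by
    rw [abs_of_nonneg (negPart_nonneg a), ← posPart_add_negPart]
    exact le_add_of_nonneg_left (posPart_nonneg a)

variable [NormedSpace ℝ E]

/-- Normed lattices are not assumed to be ordered vector spaces; monotonicity of scalar
multiplication follows from the closedness of the positive cone, approximating `c` by
`⌊c n⌋₊ / n`. -/
instance HasSolidNorm.toPosSMulMono : PosSMulMono ℝ E :=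
  PosSMulMono.of_smul_nonneg fun c hc x hx => by
    have hq : ∀ n : ℕ, 0 ≤ ((⌊c * n⌋₊ : ℝ) / n) • x := by
      intro n
      rcases Nat.eq_zero_or_pos n with rfl | hn
      · simp
      refine nonneg_of_nsmul_nonneg hn.ne' ?_
      rw [← Nat.cast_smul_eq_nsmul ℝ, smul_smul, mul_div_cancel₀ _ (Nat.cast_ne_zero.2 hn.ne'),
        Nat.cast_smul_eq_nsmul]
      exact nsmul_nonneg hx _
    exact isClosed_Ici.mem_of_tendsto (((tendsto_nat_floor_mul_div_atTop hc).comp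
      tendsto_natCast_atTop_atTop).smul_const x) (.of_forall hq)

lemma exists_forall_abs_le_two_pow_smul [CompleteSpace E] {z : ℕ → E} {C : ℝ}
    (hz : ∀ m, ‖z m‖ ≤ C) : ∃ X : E, 0 ≤ X ∧ ∀ m, |z m| ≤ (2 : ℝ) ^ m • X := by
  have hterm : ∀ m, 0 ≤ ((1 : ℝ) / 2) ^ m • |z m| := fun m =>
    smul_nonneg (by positivity) (abs_nonneg _)
  have hsum : Summable fun m => ((1 : ℝ) / 2) ^ m • |z m| := by
    refine .of_norm_bounded (summable_geometric_two.mul_left C) fun m => ?_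
    rw [norm_smul, norm_abs_eq_norm, Real.norm_of_nonneg (by positivity), mul_comm]
    exact mul_le_mul_of_nonneg_right (hz m) (by positivity)
  refine ⟨∑' m, ((1 : ℝ) / 2) ^ m • |z m|, tsum_nonneg hterm, fun m => ?_⟩
  calc |z m| = (2 : ℝ) ^ m • ((1 : ℝ) / 2) ^ m • |z m| := by
        rw [smul_smul, ← mul_pow]; norm_num
    _ ≤ (2 : ℝ) ^ m • ∑' m, ((1 : ℝ) / 2) ^ m • |z m| :=
        smul_le_smul_of_nonneg_left (hsum.le_tsum m fun j _ => hterm j) (by positivity)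

end NormedLattice

section DualAbs

variable {E : Type*} [NormedAddCommGroup E] [Lattice E] [IsOrderedAddMonoid E] [NormedSpace ℝ E]
  {f : E →L[ℝ] ℝ} {x y : E}

lemma dualAbs_nonempty (f : E →L[ℝ] ℝ) (hx : 0 ≤ x) :
    ((fun y => f y) '' {y : E | |y| ≤ x}).Nonempty :=
  ⟨f 0, 0, by simpa using hx, rfl⟩

lemma exists_lt_apply_of_lt_dualAbs {c : ℝ} (hx : 0 ≤ x) (h : c < dualAbs f x) :
    ∃ y, |y| ≤ x ∧ c < f y := by
  obtain ⟨_, ⟨y, hy, rfl⟩, hlt⟩ := exists_lt_of_lt_csSup (dualAbs_nonempty f hx) h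
  exact ⟨y, hy, hlt⟩

variable [HasSolidNorm E]

lemma apply_le_norm_mul_norm_of_abs_le (hy : |y| ≤ x) : f y ≤ ‖f‖ * ‖x‖ := by
  have hyx : |y| ≤ |x| := by rwa [abs_of_nonneg ((abs_nonneg y).trans hy)]
  exact (le_abs_self _).trans ((f.le_opNorm y).trans
    (mul_le_mul_of_nonneg_left (norm_le_norm_of_abs_le_abs hyx) (norm_nonneg f)))

lemma dualAbs_bddAbove (f : E →L[ℝ] ℝ) (x : E) :
    BddAbove ((fun y => f y) '' {y : E | |y| ≤ x}) :=
  ⟨‖f‖ * ‖x‖, by rintro _ ⟨y, hy, rfl⟩; exact apply_le_norm_mul_norm_of_abs_le hy⟩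

lemma le_dualAbs (hy : |y| ≤ x) : f y ≤ dualAbs f x :=
  le_csSup (dualAbs_bddAbove f x) ⟨y, hy, rfl⟩

lemma abs_apply_le_dualAbs (hy : |y| ≤ x) : |f y| ≤ dualAbs f x :=
  abs_le.2 ⟨neg_le.1 (by simpa using le_dualAbs (f := f) (y := -y) (by rwa [abs_neg])),
    le_dualAbs hy⟩

lemma dualAbs_nonneg (hx : 0 ≤ x) : 0 ≤ dualAbs f x := by
  simpa using le_dualAbs (f := f) (y := 0) (by simpa using hx)

lemma dualAbs_le_norm (hx : 0 ≤ x) : dualAbs f x ≤ ‖f‖ * ‖x‖ :=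
  csSup_le (dualAbs_nonempty f hx) fun _ ⟨_, hy, hfy⟩ =>
    hfy ▸ apply_le_norm_mul_norm_of_abs_le hy

lemma dualAbs_abs_le_norm (x : E) : dualAbs f |x| ≤ ‖f‖ * ‖x‖ :=
  norm_abs_eq_norm x ▸ dualAbs_le_norm (abs_nonneg x)

@[simp]
lemma dualAbs_zero : dualAbs f 0 = 0 :=
  le_antisymm (by simpa using dualAbs_le_norm (f := f) le_rfl) (dualAbs_nonneg le_rfl)

lemma dualAbs_mono (hx : 0 ≤ x) (hxy : x ≤ y) : dualAbs f x ≤ dualAbs f y :=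
  csSup_le_csSup (dualAbs_bddAbove f y) (dualAbs_nonempty f hx)
    (Set.image_mono fun _ hz => le_trans hz hxy)

lemma dualAbs_add (hx : 0 ≤ x) (hy : 0 ≤ y) : dualAbs f (x + y) = dualAbs f x + dualAbs f y := by
  refine le_antisymm ?_ ?_
  · refine csSup_le (dualAbs_nonempty f (add_nonneg hx hy)) ?_
    rintro _ ⟨z, hz, rfl⟩
    obtain ⟨p, q, rfl, hp, hq⟩ := exists_eq_add_of_abs_le_add hx hy hz
    simpa using add_le_add (le_dualAbs (f := f) hp) (le_dualAbs (f := f) hq)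
  · rw [← le_sub_iff_add_le]
    refine csSup_le (dualAbs_nonempty f hx) ?_
    rintro _ ⟨p, hp, rfl⟩
    rw [le_sub_iff_add_le', ← le_sub_iff_add_le]
    refine csSup_le (dualAbs_nonempty f hy) ?_
    rintro _ ⟨q, hq, rfl⟩
    rw [le_sub_iff_add_le', ← map_add]
    exact le_dualAbs ((abs_add_le p q).trans (add_le_add hp hq))

lemma dualAbs_sum {ι : Type*} (s : Finset ι) {p : ι → E} (hp : ∀ i ∈ s, 0 ≤ p i) :
    dualAbs f (∑ i ∈ s, p i) = ∑ i ∈ s, dualAbs f (p i) := by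
  induction s using Finset.cons_induction with
  | empty => simp
  | cons i s hi ih =>
    simp only [Finset.mem_cons, forall_eq_or_imp] at hp
    rw [Finset.sum_cons, Finset.sum_cons, dualAbs_add hp.1 (Finset.sum_nonneg hp.2), ih hp.2]

lemma abs_apply_le_dualAbs_posPart_sub_add {u : E} (hu : 0 ≤ u) (y : E) :
    |f y| ≤ dualAbs f (|y| - u)⁺ + dualAbs f u := by
  have hinf : 0 ≤ |y| ⊓ u := le_inf (abs_nonneg y) hu
  calc |f y| ≤ dualAbs f |y| := abs_apply_le_dualAbs le_rfl
    _ = dualAbs f (|y| - u)⁺ + dualAbs f (|y| ⊓ u) := by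
      rw [← dualAbs_add (posPart_nonneg _) hinf, inf_eq_sub_posPart_sub, add_sub_cancel]
    _ ≤ dualAbs f (|y| - u)⁺ + dualAbs f u := by gcongr; exact dualAbs_mono hinf inf_le_right

lemma dualAbs_posPart_le_sub_add {c : E} (hc : 0 ≤ c) (y : E) :
    dualAbs f y⁺ ≤ dualAbs f (y - c)⁺ + dualAbs f c := by
  rw [← dualAbs_add (posPart_nonneg _) hc]
  refine dualAbs_mono (posPart_nonneg y) (sup_le ?_ (add_nonneg (posPart_nonneg _) hc))
  exact sub_le_iff_le_add.1 (le_posPart (y - c))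

end DualAbs

namespace WeaklyNull

variable {X : Type*} [NormedAddCommGroup X] [NormedSpace ℝ X] {w : ℕ → X}

lemma exists_norm_le (hw : WeaklyNull w) : ∃ C, ∀ n, ‖w n‖ ≤ C := by
  have hpt : ∀ h : StrongDual ℝ X, ∃ C, ∀ n,
      ‖NormedSpace.inclusionInDoubleDual ℝ X (w n) h‖ ≤ C := by
    intro h
    obtain ⟨C, hC⟩ := (hw h).norm.bddAbove_range
    exact ⟨C, fun n => by simpa using hC ⟨n, rfl⟩⟩
  obtain ⟨C, hC⟩ := banach_steinhaus hpt
  exact ⟨C, fun n => (NormedSpace.inclusionInDoubleDualLi ℝ (E := X)).norm_map (w n) ▸ hC n⟩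

lemma comp_tendsto (hw : WeaklyNull w) {t : ℕ → ℕ} (ht : Tendsto t atTop atTop) :
    WeaklyNull fun n => w (t n) :=
  fun h => (hw h).comp ht

lemma comp_injective (hw : WeaklyNull w) {t : ℕ → ℕ} (ht : t.Injective) :
    WeaklyNull fun n => w (t n) :=
  hw.comp_tendsto (Nat.cofinite_eq_atTop ▸ ht.tendsto_cofinite)

end WeaklyNull

lemma exists_strictMono_forall_lt {F : Filter ℕ} [F.NeBot] (hF : F ≤ atTop)
    {P : ℕ → ℕ → Prop} {R : ℕ → ℕ → ℕ → ℕ → Prop}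
    (hP : ∀ j, ∀ᶠ q in F, P j q) (hR : ∀ i p j, ∀ᶠ q in F, R i p j q) :
    ∃ σ : ℕ → ℕ, StrictMono σ ∧ (∀ j, P j (σ j)) ∧ ∀ i j, i < j → R i (σ i) j (σ j) := by
  have hnext : ∀ j (τ : ℕ → ℕ), ∃ q, P j q ∧ ∀ i < j, τ i < q ∧ R i (τ i) j q := fun j τ =>
    ((hP j).and ((eventually_all_finite (Set.finite_Iio j)).2 fun i _ =>
      Eventually.and (hF (eventually_gt_atTop (τ i))) (hR i (τ i) j))).exists
  choose next hnextP hnextR using hnext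
  let σ : ℕ → ℕ := Nat.strongRec fun j σ' => next j fun i => if hi : i < j then σ' i hi else 0
  have hσ : ∀ j, σ j = next j fun i => if i < j then σ i else 0 := fun j => by
    simp only [σ]
    rw [Nat.strongRec_eq]
    simp
  have hσR : ∀ i j, i < j → σ i < σ j ∧ R i (σ i) j (σ j) := fun i j hij => by
    simpa [hij, ← hσ] using hnextR j (fun i => if i < j then σ i else 0) i hij
  exact ⟨σ, strictMono_nat_of_lt_succ fun j => (hσR j (j + 1) j.lt_succ_self).1,
    fun j => hσ j ▸ hnextP _ _, fun i j hij => (hσR i j hij).2⟩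

lemma exists_strictMono_sum_erase_le {a : ℕ → ℕ → ℝ} {M ε : ℝ} (ha : ∀ j i, 0 ≤ a j i)
    (hrow : ∀ j (s : Finset ℕ), ∑ i ∈ s, a j i ≤ M) (hε : 0 < ε) :
    ∃ t : ℕ → ℕ, StrictMono t ∧ ∀ j (s : Finset ℕ), ∑ i ∈ s.erase j, a (t j) (t i) ≤ ε := by
  let U : Ultrafilter ℕ := .of atTop
  have hU : (U : Filter ℕ) ≤ atTop := Ultrafilter.of_le atTop
  have hnull : ∀ {b : ℕ → ℝ}, (∀ i, 0 ≤ b i) → (∀ s : Finset ℕ, ∑ i ∈ s, b i ≤ M) →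
      Tendsto b U (𝓝 0) := fun hb hs =>
    (summable_of_sum_le hb hs).tendsto_cofinite_zero.mono_left (Nat.cofinite_eq_atTop ▸ hU)
  have hcol : ∀ i, ∃ c, Tendsto (fun j => a j i) U (𝓝 c) := fun i =>
    let ⟨c, _, hc⟩ := (isCompact_Icc (a := 0) (b := M)).ultrafilter_le_nhds (U.map fun j => a j i)
      (by
        rw [Ultrafilter.coe_map, le_principal_iff]
        exact mem_map.2 (Eventually.of_forall fun j => ⟨ha j i, by simpa using hrow j {i}⟩))
    ⟨c, hc⟩
  choose c hc using hcol
  have hc0 : ∀ i, 0 ≤ c i := fun i => ge_of_tendsto (hc i) (.of_forall fun j => ha j i)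
  have hcsum : ∀ s : Finset ℕ, ∑ i ∈ s, c i ≤ M := fun s =>
    le_of_tendsto (tendsto_finsetSum s fun i _ => hc i) (.of_forall fun j => hrow j s)
  -- Each off-diagonal entry `a (t j) (t l)` will be at most `e l`: for `l > j` because row `t j`
  -- is summable, for `l < j` because column `t l` is close to its limit `c (t l)`, itself small.
  set e : ℕ → ℝ := fun l => ε / 2 * (1 / 2) ^ l
  have he : ∀ l, 0 < e l := fun l => by positivity
  obtain ⟨t, ht, hP, hR⟩ := exists_strictMono_forall_lt hU
    (P := fun j q => c q ≤ e j / 2) (R := fun i p j q => a q p ≤ c p + e i / 2 ∧ a p q ≤ e j)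
    (fun j => (hnull hc0 hcsum).eventually (ge_mem_nhds (half_pos (he j))))
    (fun i p j => ((hc p).eventually (ge_mem_nhds (lt_add_of_pos_right _ (half_pos (he i))))).and
      ((hnull (ha p) (hrow p)).eventually (ge_mem_nhds (he j))))
  refine ⟨t, ht, fun j s => ?_⟩
  have hterm : ∀ l ∈ s.erase j, a (t j) (t l) ≤ e l := fun l hl => by
    rcases (Finset.ne_of_mem_erase hl).lt_or_gt with h | h
    · linarith [(hR l j h).1, hP l]
    · exact (hR j l h).2
  calc ∑ l ∈ s.erase j, a (t j) (t l) ≤ ∑ l ∈ s.erase j, e l := Finset.sum_le_sum hterm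
    _ ≤ ∑' l, e l :=
      (summable_geometric_two.mul_left (ε / 2)).sum_le_tsum _ fun l _ => (he l).le
    _ = ε := by rw [tsum_mul_left, tsum_geometric_two]; ring

lemma exists_strictMono_pow_le {δ : ℕ → ℝ} (hδ : ∀ n, 0 < δ n) {r : ℝ} (hr₀ : 0 ≤ r)
    (hr₁ : r < 1) : ∃ σ : ℕ → ℕ, StrictMono σ ∧ ∀ i j, i < j → r ^ σ j ≤ δ (σ i) := by
  obtain ⟨σ, hσ, -, hσδ⟩ := exists_strictMono_forall_lt (F := atTop) le_rfl
    (P := fun _ _ => True) (R := fun _ p _ q => r ^ q ≤ δ p)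
    (fun _ => .of_forall fun _ => trivial) fun _ p _ =>
      (tendsto_pow_atTop_nhds_zero_of_lt_one hr₀ hr₁).eventually (ge_mem_nhds (hδ p))
  exact ⟨σ, hσ, hσδ⟩

lemma sub_le_tsum_of_sum_erase_abs_le {f : ℕ → ℝ} (hf : Summable f) (j : ℕ) {c : ℝ}
    (hc : ∀ s : Finset ℕ, ∑ i ∈ s.erase j, |f i| ≤ c) : f j - c ≤ ∑' i, f i := by
  classical
  set g : ℕ → ℝ := fun i => if i = j then 0 else f i
  have hg : ∀ s : Finset ℕ, ∑ i ∈ s, |g i| ≤ c := fun s => by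
    rw [← Finset.sum_erase s (by simp [g] : |g j| = 0)]
    exact (Finset.sum_congr rfl fun i hi => by simp [g, Finset.ne_of_mem_erase hi]).trans_le (hc s)
  have hgs : Summable fun i => |g i| := summable_of_sum_le (fun _ => abs_nonneg _) hg
  have hneg : -c ≤ ∑' i, g i := calc
    -c ≤ -∑' i, |g i| := neg_le_neg (hgs.tsum_le_of_sum_le hg)
    _ = ∑' i, -|g i| := tsum_neg.symm
    _ ≤ ∑' i, g i := hgs.neg.tsum_le_tsum (fun i => neg_abs_le (g i)) hgs.of_abs
  rw [hf.tsum_eq_add_tsum_ite j]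
  linarith

section ConeExtension

variable {E : Type*} [NormedAddCommGroup E] [Lattice E] [HasSolidNorm E] [IsOrderedAddMonoid E]
  [NormedSpace ℝ E]

lemma exists_clm_eq_posPart_sub_negPart {q : E → ℝ} {K : ℝ}
    (hadd : ∀ a b, 0 ≤ a → 0 ≤ b → q (a + b) = q a + q b)
    (hbd : ∀ a, 0 ≤ a → |q a| ≤ K * ‖a‖) :
    ∃ Θ : E →L[ℝ] ℝ, ∀ x, Θ x = q x⁺ - q x⁻ := by
  have hmap_add : ∀ x y : E, q (x + y)⁺ - q (x + y)⁻ = (q x⁺ - q x⁻) + (q y⁺ - q y⁻) := by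
    intro x y
    have hsplit : (x + y)⁺ + (x⁻ + y⁻) = (x + y)⁻ + (x⁺ + y⁺) := calc
      (x + y)⁺ + (x⁻ + y⁻) = ((x + y)⁺ - (x + y)⁻) + (x + y)⁻ + x⁻ + y⁻ := by abel
      _ = (x⁺ - x⁻) + (y⁺ - y⁻) + (x + y)⁻ + x⁻ + y⁻ := by simp only [posPart_sub_negPart]
      _ = (x + y)⁻ + (x⁺ + y⁺) := by abel
    have hq := congrArg q hsplit
    rw [hadd _ _ (posPart_nonneg _) (add_nonneg (negPart_nonneg _) (negPart_nonneg _)),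
      hadd _ _ (negPart_nonneg _) (negPart_nonneg _),
      hadd _ _ (negPart_nonneg _) (add_nonneg (posPart_nonneg _) (posPart_nonneg _)),
      hadd _ _ (posPart_nonneg _) (posPart_nonneg _)] at hq
    linarith
  let Q : E →+ ℝ := AddMonoidHom.mk' (fun x => q x⁺ - q x⁻) hmap_add
  have hpart : ∀ {a x : E}, 0 ≤ a → ‖a‖ ≤ ‖x‖ → |q a| ≤ |K| * ‖x‖ := fun ha hax =>
    (hbd _ ha).trans (mul_le_mul (le_abs_self K) hax (norm_nonneg _) (abs_nonneg K))
  have hQ : Continuous Q := AddMonoidHomClass.continuous_of_bound Q (2 * |K|) fun x => by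
    rw [Real.norm_eq_abs]
    calc |q x⁺ - q x⁻| ≤ |q x⁺| + |q x⁻| := abs_sub _ _
      _ ≤ |K| * ‖x‖ + |K| * ‖x‖ := add_le_add (hpart (posPart_nonneg x) (norm_posPart_le x))
          (hpart (negPart_nonneg x) (norm_negPart_le x))
      _ = 2 * |K| * ‖x‖ := by ring
  exact ⟨Q.toRealLinearMap hQ, fun _ => rfl⟩

lemma exists_clm_eq_tsum_sub_tsum {p : ℕ → E → ℝ} {K : ℝ}
    (hadd : ∀ i a b, 0 ≤ a → 0 ≤ b → p i (a + b) = p i a + p i b)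
    (hbd : ∀ a, 0 ≤ a → ∀ s : Finset ℕ, ∑ i ∈ s, |p i a| ≤ K * ‖a‖) :
    ∃ Θ : E →L[ℝ] ℝ, ∀ x, Θ x = ∑' i, p i x⁺ - ∑' i, p i x⁻ := by
  have habs : ∀ a, 0 ≤ a → Summable fun i => |p i a| := fun a ha =>
    summable_of_sum_le (fun _ => abs_nonneg _) (hbd a ha)
  refine exists_clm_eq_posPart_sub_negPart (q := fun a => ∑' i, p i a) (K := K)
    (fun a b ha hb => ?_) (fun a ha => ?_)
  · simp only [hadd _ a b ha hb]
    exact (habs a ha).of_abs.tsum_add (habs b hb).of_abs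
  · have h := norm_tsum_le_tsum_norm (f := fun i => p i a)
      (by simpa only [Real.norm_eq_abs] using habs a ha)
    simp only [Real.norm_eq_abs] at h
    exact h.trans ((habs a ha).tsum_le_of_sum_le (hbd a ha))

end ConeExtension

section BandComponent

variable {E : Type*} [NormedAddCommGroup E] [Lattice E] [HasSolidNorm E] [IsOrderedAddMonoid E]
  [NormedSpace ℝ E] {h : E →L[ℝ] ℝ} {u v x y z w : E}

/-- The value at `x ≥ 0` of the component of `|h|` in the band of `E′` carried by `u ≥ 0`. -/
noncomputable def bandComponent (h : E →L[ℝ] ℝ) (u x : E) : ℝ :=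
  ⨆ r : ℕ, dualAbs h (x ⊓ r • u)

lemma monotone_dualAbs_inf_nsmul (hx : 0 ≤ x) (hu : 0 ≤ u) :
    Monotone fun r : ℕ => dualAbs h (x ⊓ r • u) := fun r _ hr =>
  dualAbs_mono (le_inf hx (nsmul_nonneg hu r)) (inf_le_inf_left x (nsmul_le_nsmul_left hu hr))

lemma bddAbove_dualAbs_inf_nsmul (hx : 0 ≤ x) (hu : 0 ≤ u) :
    BddAbove (Set.range fun r : ℕ => dualAbs h (x ⊓ r • u)) :=
  ⟨dualAbs h x, by
    rintro _ ⟨r, rfl⟩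
    exact dualAbs_mono (le_inf hx (nsmul_nonneg hu r)) inf_le_left⟩

lemma tendsto_bandComponent (hx : 0 ≤ x) (hu : 0 ≤ u) :
    Tendsto (fun r : ℕ => dualAbs h (x ⊓ r • u)) atTop (𝓝 (bandComponent h u x)) :=
  tendsto_atTop_ciSup (monotone_dualAbs_inf_nsmul hx hu) (bddAbove_dualAbs_inf_nsmul hx hu)

lemma dualAbs_inf_nsmul_le_bandComponent (hx : 0 ≤ x) (hu : 0 ≤ u) (r : ℕ) :
    dualAbs h (x ⊓ r • u) ≤ bandComponent h u x :=
  le_ciSup (bddAbove_dualAbs_inf_nsmul hx hu) r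

lemma dualAbs_inf_le_bandComponent (hx : 0 ≤ x) (hu : 0 ≤ u) :
    dualAbs h (x ⊓ u) ≤ bandComponent h u x := by
  simpa using dualAbs_inf_nsmul_le_bandComponent (h := h) hx hu 1

lemma bandComponent_nonneg (hx : 0 ≤ x) (hu : 0 ≤ u) : 0 ≤ bandComponent h u x :=
  (dualAbs_nonneg (le_inf hx hu)).trans (dualAbs_inf_le_bandComponent hx hu)

lemma bandComponent_eq_zero (hx : 0 ≤ x) (hu : 0 ≤ u) (hxu : x ⊓ u = 0) :
    bandComponent h u x = 0 := by
  have hr : ∀ r : ℕ, x ⊓ r • u = 0 := fun r => by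
    rw [inf_comm]
    exact nsmul_inf_eq_zero r hu hx (by rwa [inf_comm])
  simp [bandComponent, hr]

lemma bandComponent_add (hx : 0 ≤ x) (hy : 0 ≤ y) (hu : 0 ≤ u) :
    bandComponent h u (x + y) = bandComponent h u x + bandComponent h u y := by
  have hru : ∀ r : ℕ, 0 ≤ r • u := fun r => nsmul_nonneg hu r
  have hsplit : ∀ r : ℕ, dualAbs h (x ⊓ r • u) + dualAbs h (y ⊓ r • u) =
      dualAbs h (x ⊓ r • u + y ⊓ r • u) := fun r =>
    (dualAbs_add (le_inf hx (hru r)) (le_inf hy (hru r))).symm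
  refine le_antisymm (ciSup_le fun r => ?_) (le_of_tendsto'
    ((tendsto_bandComponent hx hu).add (tendsto_bandComponent hy hu)) fun r => ?_)
  · calc dualAbs h ((x + y) ⊓ r • u) ≤ dualAbs h (x ⊓ r • u) + dualAbs h (y ⊓ r • u) := by
          rw [hsplit]
          exact dualAbs_mono (le_inf (add_nonneg hx hy) (hru r))
            (add_inf_le_inf_add_inf hx hy (hru r))
      _ ≤ _ := add_le_add (dualAbs_inf_nsmul_le_bandComponent hx hu r)
          (dualAbs_inf_nsmul_le_bandComponent hy hu r)
  · calc dualAbs h (x ⊓ r • u) + dualAbs h (y ⊓ r • u) ≤ dualAbs h ((x + y) ⊓ (2 * r) • u) := by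
          rw [hsplit, two_mul, add_nsmul]
          exact dualAbs_mono (add_nonneg (le_inf hx (hru r)) (le_inf hy (hru r)))
            (le_inf (add_le_add inf_le_left inf_le_left) (add_le_add inf_le_right inf_le_right))
      _ ≤ _ := dualAbs_inf_nsmul_le_bandComponent (add_nonneg hx hy) hu _

lemma bandComponent_add_of_inf_eq_zero (hx : 0 ≤ x) (hu : 0 ≤ u) (hv : 0 ≤ v)
    (huv : u ⊓ v = 0) :
    bandComponent h (u + v) x = bandComponent h u x + bandComponent h v x := by
  refine tendsto_nhds_unique (tendsto_bandComponent hx (add_nonneg hu hv)) ?_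
  have hsplit : ∀ r : ℕ, dualAbs h (x ⊓ r • (u + v)) =
      dualAbs h (x ⊓ r • u) + dualAbs h (x ⊓ r • v) := fun r => by
    rw [smul_add, inf_add_eq_inf_add_inf hx (nsmul_nonneg hu r) (nsmul_nonneg hv r)
      (nsmul_inf_nsmul_eq_zero r r hu hv huv),
      dualAbs_add (le_inf hx (nsmul_nonneg hu r)) (le_inf hx (nsmul_nonneg hv r))]
  simp only [hsplit]
  exact (tendsto_bandComponent hx hu).add (tendsto_bandComponent hx hv)

lemma sum_bandComponent_le {ι : Type*} (s : Finset ι) {u : ι → E} (hu : ∀ i, 0 ≤ u i)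
    (hdisj : Pairwise fun i j => u i ⊓ u j = 0) (hx : 0 ≤ x) :
    ∑ i ∈ s, bandComponent h (u i) x ≤ dualAbs h x := by
  refine le_of_tendsto' (tendsto_finsetSum s fun i _ => tendsto_bandComponent hx (hu i))
    fun r => ?_
  have hpos : ∀ i, 0 ≤ x ⊓ r • u i := fun i => le_inf hx (nsmul_nonneg (hu i) r)
  have hdisj_r : Pairwise fun i j => (x ⊓ r • u i) ⊓ (x ⊓ r • u j) = 0 := fun i j hij =>
    inf_eq_zero_of_le_of_le (hpos i) (hpos j) inf_le_right inf_le_right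
      (nsmul_inf_nsmul_eq_zero r r (hu i) (hu j) (hdisj hij))
  rw [← dualAbs_sum s fun i _ => hpos i]
  exact dualAbs_mono (Finset.sum_nonneg fun i _ => hpos i)
    (Finset.sum_le_of_pairwise_inf_eq_zero s hpos hdisj_r hx fun i _ => inf_le_left)

/-- The component of `|h|` in the band of `z`, taken with the sign of `w`. -/
noncomputable def signedBandComponent (h : E →L[ℝ] ℝ) (z w x : E) : ℝ :=
  bandComponent h (z ⊓ w⁺) x - bandComponent h (z ⊓ w⁻) x

lemma bandComponent_inf_posPart_add_inf_negPart (hx : 0 ≤ x) (hz : 0 ≤ z) (hzw : z ≤ |w|) :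
    bandComponent h (z ⊓ w⁺) x + bandComponent h (z ⊓ w⁻) x = bandComponent h z x := by
  rw [← bandComponent_add_of_inf_eq_zero hx (le_inf hz (posPart_nonneg w))
    (le_inf hz (negPart_nonneg w)) (inf_eq_zero_of_le_of_le (le_inf hz (posPart_nonneg w))
      (le_inf hz (negPart_nonneg w)) inf_le_right inf_le_right (posPart_inf_negPart_eq_zero w)),
    inf_posPart_add_inf_negPart hz hzw]

lemma abs_signedBandComponent_le (hx : 0 ≤ x) (hz : 0 ≤ z) (hzw : z ≤ |w|) :
    |signedBandComponent h z w x| ≤ bandComponent h z x := by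
  rw [← bandComponent_inf_posPart_add_inf_negPart hx hz hzw]
  refine (abs_sub _ _).trans_eq ?_
  rw [abs_of_nonneg (bandComponent_nonneg hx (le_inf hz (posPart_nonneg w))),
    abs_of_nonneg (bandComponent_nonneg hx (le_inf hz (negPart_nonneg w)))]

lemma signedBandComponent_add (hx : 0 ≤ x) (hy : 0 ≤ y) (hz : 0 ≤ z) :
    signedBandComponent h z w (x + y) =
      signedBandComponent h z w x + signedBandComponent h z w y := by
  simp only [signedBandComponent, bandComponent_add hx hy (le_inf hz (posPart_nonneg w)),
    bandComponent_add hx hy (le_inf hz (negPart_nonneg w))]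
  ring

lemma dualAbs_le_signedBandComponent_posPart_sub_negPart (hz : 0 ≤ z) (hzw : z ≤ |w|) :
    dualAbs h z ≤ signedBandComponent h z w w⁺ - signedBandComponent h z w w⁻ := by
  have hp : 0 ≤ z ⊓ w⁺ := le_inf hz (posPart_nonneg w)
  have hn : 0 ≤ z ⊓ w⁻ := le_inf hz (negPart_nonneg w)
  have hpn : bandComponent h (z ⊓ w⁻) w⁺ = 0 := bandComponent_eq_zero (posPart_nonneg w) hn <|
    inf_eq_zero_of_le_of_le (posPart_nonneg w) hn le_rfl inf_le_right
      (posPart_inf_negPart_eq_zero w)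
  have hnp : bandComponent h (z ⊓ w⁺) w⁻ = 0 := bandComponent_eq_zero (negPart_nonneg w) hp <|
    inf_eq_zero_of_le_of_le (negPart_nonneg w) hp le_rfl inf_le_right
      (by rw [inf_comm]; exact posPart_inf_negPart_eq_zero w)
  have hpp := dualAbs_inf_le_bandComponent (h := h) (posPart_nonneg w) hp
  have hnn := dualAbs_inf_le_bandComponent (h := h) (negPart_nonneg w) hn
  rw [inf_of_le_right inf_le_right] at hpp hnn
  have hsum : dualAbs h z = dualAbs h (z ⊓ w⁺) + dualAbs h (z ⊓ w⁻) := by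
    rw [← dualAbs_add hp hn, inf_posPart_add_inf_negPart hz hzw]
  simp only [signedBandComponent, hpn, hnp]
  linarith

lemma abs_signedBandComponent_posPart_sub_negPart_le (hz : 0 ≤ z) (hzw : z ≤ |w|) (y : E) :
    |signedBandComponent h z w y⁺ - signedBandComponent h z w y⁻| ≤ bandComponent h z |y| :=
  calc |signedBandComponent h z w y⁺ - signedBandComponent h z w y⁻|
      ≤ |signedBandComponent h z w y⁺| + |signedBandComponent h z w y⁻| := abs_sub _ _
    _ ≤ bandComponent h z y⁺ + bandComponent h z y⁻ :=
      add_le_add (abs_signedBandComponent_le (posPart_nonneg y) hz hzw)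
        (abs_signedBandComponent_le (negPart_nonneg y) hz hzw)
    _ = bandComponent h z |y| := by
      rw [← bandComponent_add (posPart_nonneg y) (negPart_nonneg y) hz, posPart_add_negPart]

lemma sum_abs_signedBandComponent_le {ι : Type*} (s : Finset ι) {z w : ι → E}
    (hz : ∀ i, 0 ≤ z i) (hdisj : Pairwise fun i j => z i ⊓ z j = 0) (hzw : ∀ i, z i ≤ |w i|)
    (hx : 0 ≤ x) : ∑ i ∈ s, |signedBandComponent h (z i) (w i) x| ≤ dualAbs h x :=
  (Finset.sum_le_sum fun i _ => abs_signedBandComponent_le hx (hz i) (hzw i)).trans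
    (sum_bandComponent_le s hz hdisj hx)

end BandComponent

section DisjointDomination

variable {E : Type*} [NormedAddCommGroup E] [Lattice E] [HasSolidNorm E] [IsOrderedAddMonoid E]
  [NormedSpace ℝ E] {h : E →L[ℝ] ℝ} {w z : ℕ → E}

lemma exists_dualAbs_lt_of_disjoint_le_abs (hw : WeaklyNull w) (hz : ∀ i, 0 ≤ z i)
    (hdisj : Pairwise fun i j => z i ⊓ z j = 0) (hzw : ∀ i, z i ≤ |w i|) {η : ℝ} (hη : 0 < η) :
    ∃ i, dualAbs h (z i) < η := by
  by_contra! hbig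
  obtain ⟨C, hC⟩ := hw.exists_norm_le
  obtain ⟨t, ht, hoff⟩ := exists_strictMono_sum_erase_le
    (a := fun j i => bandComponent h (z i) |w j|) (M := ‖h‖ * C)
    (fun j i => bandComponent_nonneg (abs_nonneg _) (hz i))
    (fun j s => (sum_bandComponent_le s hz hdisj (abs_nonneg _)).trans
      ((dualAbs_abs_le_norm _).trans (mul_le_mul_of_nonneg_left (hC j) (norm_nonneg h))))
    (half_pos hη)
  set p : ℕ → E → ℝ := fun i => signedBandComponent h (z (t i)) (w (t i))
  have hp_sum : ∀ x, 0 ≤ x → ∀ s : Finset ℕ, ∑ i ∈ s, |p i x| ≤ ‖h‖ * ‖x‖ := fun x hx s =>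
    (sum_abs_signedBandComponent_le s (fun i => hz (t i)) (hdisj.comp_of_injective ht.injective)
      (fun i => hzw (t i)) hx).trans (dualAbs_le_norm hx)
  have hp_summable : ∀ x, 0 ≤ x → Summable fun i => p i x := fun x hx =>
    (summable_of_sum_le (fun _ => abs_nonneg _) (hp_sum x hx)).of_abs
  obtain ⟨Θ, hΘ⟩ := exists_clm_eq_tsum_sub_tsum
    (fun i a b ha hb => signedBandComponent_add ha hb (hz _)) hp_sum
  have hΘw : ∀ j, η / 2 ≤ Θ (w (t j)) := fun j => by
    set y := w (t j)
    have hpos := hp_summable _ (posPart_nonneg y)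
    have hneg := hp_summable _ (negPart_nonneg y)
    rw [hΘ, ← hpos.tsum_sub hneg]
    refine le_trans ?_ (sub_le_tsum_of_sum_erase_abs_le (c := η / 2) (hpos.sub hneg) j fun s =>
      (Finset.sum_le_sum fun i _ =>
        abs_signedBandComponent_posPart_sub_negPart_le (hz _) (hzw _) y).trans (hoff j s))
    linarith [hbig (t j), dualAbs_le_signedBandComponent_posPart_sub_negPart (h := h)
      (hz (t j)) (hzw (t j))]
  have := ge_of_tendsto (hw.comp_tendsto ht.tendsto_atTop Θ) (.of_forall hΘw)
  linarith

lemma tendsto_dualAbs_of_disjoint_le_abs (hw : WeaklyNull w) (hz : ∀ i, 0 ≤ z i)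
    (hdisj : Pairwise fun i j => z i ⊓ z j = 0) (hzw : ∀ i, z i ≤ |w i|) :
    Tendsto (fun i => dualAbs h (z i)) atTop (𝓝 0) := by
  refine tendsto_order.2 ⟨fun a ha => .of_forall fun i => ha.trans_le (dualAbs_nonneg (hz i)),
    fun η hη => ?_⟩
  by_contra hfreq
  obtain ⟨φ, hφ, hφη⟩ := extraction_of_frequently_atTop (not_eventually.1 hfreq)
  obtain ⟨i, hi⟩ := exists_dualAbs_lt_of_disjoint_le_abs (hw.comp_tendsto hφ.tendsto_atTop)
    (fun i => hz (φ i)) (hdisj.comp_of_injective hφ.injective) (fun i => hzw (φ i)) hη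
  exact hφη i hi

lemma WeaklyNull.of_disjoint_of_abs_le {y : ℕ → E} (hw : WeaklyNull w)
    (hdisj : Pairwise fun m n => |y m| ⊓ |y n| = 0) (hle : ∀ m, |y m| ≤ |w m|) :
    WeaklyNull y := fun _ =>
  squeeze_zero_norm (fun _ => abs_apply_le_dualAbs le_rfl)
    (tendsto_dualAbs_of_disjoint_le_abs hw (fun _ => abs_nonneg _) hdisj hle)

end DisjointDomination

section Disjointification

variable {E : Type*} [NormedAddCommGroup E] [Lattice E] [HasSolidNorm E] [IsOrderedAddMonoid E]
  [NormedSpace ℝ E] {g : ℕ → E →L[ℝ] ℝ} {x : ℕ → E} {ε : ℝ}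

lemma lt_dualAbs_posPart_sub_smul {f : E →L[ℝ] ℝ} {a X : E} (hX : 0 ≤ X) (hε : 0 < ε)
    (h : ε < dualAbs f a⁺) : ε / 2 < dualAbs f (a - (ε / 2 / (‖f‖ * ‖X‖ + 1)) • X)⁺ := by
  set δ := ε / 2 / (‖f‖ * ‖X‖ + 1)
  have hδ : 0 ≤ δ := by positivity
  have hsmall : dualAbs f (δ • X) ≤ ε / 2 := calc
    dualAbs f (δ • X) ≤ ‖f‖ * ‖δ • X‖ := dualAbs_le_norm (smul_nonneg hδ hX)
    _ = ε / 2 * (‖f‖ * ‖X‖ / (‖f‖ * ‖X‖ + 1)) := by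
      rw [norm_smul, Real.norm_of_nonneg hδ]; ring
    _ ≤ ε / 2 :=
      mul_le_of_le_one_right (by positivity) ((div_le_one (by positivity)).2 (by linarith))
  linarith [dualAbs_posPart_le_sub_add (f := f) (smul_nonneg hδ hX) a]

lemma exists_lt_dualAbs_posPart_sub_smul_sum {K : ℕ → ℝ} (hK : ∀ m, 0 ≤ K m)
    (hbad : ∀ u, 0 ≤ u → ∃ n k, ε < dualAbs (g n) (|x k| - u)⁺) :
    ∃ κ ν : ℕ → ℕ, ∀ m,
      ε < dualAbs (g (ν m)) (|x (κ m)| - K m • ∑ i ∈ Finset.range m, |x (κ i)|)⁺ := by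
  choose! ν κ hνκ using hbad
  let s : ℕ → E := fun m => Nat.rec 0 (fun m s => s + |x (κ (K m • s))|) m
  have hs : ∀ m, s m = ∑ i ∈ Finset.range m, |x (κ (K i • s i))| := by
    intro m
    induction m with
    | zero => rfl
    | succ m ih => rw [Finset.sum_range_succ, ← ih]
  refine ⟨fun m => κ (K m • s m), fun m => ν (K m • s m), fun m => ?_⟩
  rw [← hs]
  exact hνκ _ (smul_nonneg (hK m) (hs m ▸ Finset.sum_nonneg fun i _ => abs_nonneg _))

lemma injective_of_lt_dualAbs_posPart_sub_smul_sum {κ ν : ℕ → ℕ} {K : ℕ → ℝ} (hK : ∀ m, 1 ≤ K m)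
    (hε : 0 ≤ ε)
    (h : ∀ m, ε < dualAbs (g (ν m)) (|x (κ m)| - K m • ∑ i ∈ Finset.range m, |x (κ i)|)⁺) :
    κ.Injective := by
  refine Function.Injective.of_lt_imp_ne fun i m him heq => ?_
  have hle : |x (κ m)| ≤ K m • ∑ i ∈ Finset.range m, |x (κ i)| := by
    rw [← heq]
    exact (Finset.single_le_sum (f := fun i => |x (κ i)|) (fun j _ => abs_nonneg _)
      (Finset.mem_range.2 him)).trans
      (le_smul_of_one_le_left (Finset.sum_nonneg fun j _ => abs_nonneg _) (hK m))
  have := h m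
  rw [posPart_eq_zero.2 (sub_nonpos.2 hle), dualAbs_zero] at this
  linarith

/-- The classical disjointification: with `S m = ∑_{i<m} |x (κ i)|` and `|x (κ m)| ≤ 2ᵐ X`, the
elements `(|x (κ m)| - 4ᵐ S m - δ m X)⁺` are disjoint along any subsequence on which the `δ`
decay fast enough. -/
lemma exists_pairwise_inf_eq_zero_lt_dualAbs [CompleteSpace E] {C : ℝ}
    (hx : ∀ k, ‖x k‖ ≤ C) (hε : 0 < ε)
    (hbad : ∀ u, 0 ≤ u → ∃ n k, ε < dualAbs (g n) (|x k| - u)⁺) :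
    ∃ (κ ν : ℕ → ℕ) (v : ℕ → E), κ.Injective ∧ (∀ j, 0 ≤ v j ∧ v j ≤ |x (κ j)|) ∧
      (Pairwise fun i j => v i ⊓ v j = 0) ∧ ∀ j, ε / 2 < dualAbs (g (ν j)) (v j) := by
  obtain ⟨κ, ν, hbig⟩ := exists_lt_dualAbs_posPart_sub_smul_sum (K := fun m => (4 : ℝ) ^ m)
    (fun m => by positivity) hbad
  set S : ℕ → E := fun m => ∑ i ∈ Finset.range m, |x (κ i)|
  obtain ⟨X, hX0, hX⟩ := exists_forall_abs_le_two_pow_smul fun m => hx (κ m)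
  have hS0 : ∀ m, 0 ≤ S m := fun m => Finset.sum_nonneg fun i _ => abs_nonneg _
  have hS : ∀ l m, l < m → |x (κ l)| ≤ S m := fun l m hlm =>
    Finset.single_le_sum (f := fun i => |x (κ i)|) (fun i _ => abs_nonneg _)
      (Finset.mem_range.2 hlm)
  set δ : ℕ → ℝ := fun m => ε / 2 / (‖g (ν m)‖ * ‖X‖ + 1)
  set v : ℕ → E := fun m => (|x (κ m)| - (4 : ℝ) ^ m • S m - δ m • X)⁺
  have hv_le : ∀ m, v m ≤ |x (κ m)| := fun m =>
    sup_le ((sub_le_self _ (smul_nonneg (by positivity) hX0)).trans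
      (sub_le_self _ (smul_nonneg (by positivity) (hS0 m)))) (abs_nonneg _)
  have hv_disj : ∀ l m, l < m → (1 / 2 : ℝ) ^ m ≤ δ l → v l ⊓ v m = 0 := by
    intro l m hlm hδ
    refine inf_eq_zero_of_le_posPart_sub (a := |x (κ l)|) (t := δ l) (β := (2 : ℝ) ^ m)
      (K := (4 : ℝ) ^ m) hX0 (by positivity) ?_ (posPart_nonneg _) (posPart_nonneg _)
      (posPart_mono ?_) (posPart_mono ?_)
    · calc (2 : ℝ) ^ m = 4 ^ m * (1 / 2) ^ m := by rw [← mul_pow]; norm_num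
        _ ≤ 4 ^ m * δ l := mul_le_mul_of_nonneg_left hδ (by positivity)
    · exact sub_le_sub_right (sub_le_self _ (smul_nonneg (by positivity) (hS0 l))) _
    · exact (sub_le_self _ (smul_nonneg (by positivity) hX0)).trans
        (sub_le_sub (hX m) (smul_le_smul_of_nonneg_left (hS l m hlm) (by positivity)))
  obtain ⟨σ, hσ, hσδ⟩ := exists_strictMono_pow_le (δ := δ) (fun m => by positivity)
    (r := 1 / 2) (by norm_num) (by norm_num)
  refine ⟨κ ∘ σ, ν ∘ σ, v ∘ σ, (injective_of_lt_dualAbs_posPart_sub_smul_sum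
    (fun m => one_le_pow₀ (by norm_num)) hε.le hbig).comp hσ.injective,
    fun j => ⟨posPart_nonneg _, hv_le _⟩, fun i j hij => ?_,
    fun j => lt_dualAbs_posPart_sub_smul hX0 hε (hbig (σ j))⟩
  rcases hij.lt_or_gt with h | h
  · exact hv_disj _ _ (hσ h) (hσδ i j h)
  · rw [inf_comm]
    exact hv_disj _ _ (hσ h) (hσδ j i h)

end Disjointification

lemma eventually_forall_abs_apply_le {E : Type*} [NormedAddCommGroup E] [Lattice E]
    [HasSolidNorm E] [IsOrderedAddMonoid E] [NormedSpace ℝ E] {f g : ℕ → E →L[ℝ] ℝ}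
    (hfg : ∀ n, DualAbsLE (f n) (g n)) {x : ℕ → E} (hx : WeaklyNull x) {u : E} (hu : 0 ≤ u)
    (hfu : Tendsto (fun n => dualAbs (f n) u) atTop (𝓝 0)) {ε : ℝ} (hε : 0 < ε)
    (htail : ∀ n k, dualAbs (g n) (|x k| - u)⁺ ≤ ε / 2) :
    ∀ᶠ k in atTop, ∀ n, |f n (x k)| ≤ ε := by
  obtain ⟨N, hN⟩ := eventually_atTop.1 (hfu.eventually (ge_mem_nhds (half_pos hε)))
  have hfirst : ∀ᶠ k in atTop, ∀ n ∈ Set.Iio N, |f n (x k)| ≤ ε :=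
    (eventually_all_finite (Set.finite_Iio N)).2 fun n _ =>
      (abs_zero (α := ℝ) ▸ (hx (f n)).abs).eventually (ge_mem_nhds hε)
  filter_upwards [hfirst] with k hk n
  rcases lt_or_ge n N with hn | hn
  · exact hk n hn
  · calc |f n (x k)| ≤ dualAbs (f n) (|x k| - u)⁺ + dualAbs (f n) u :=
          abs_apply_le_dualAbs_posPart_sub_add hu _
      _ ≤ ε / 2 + ε / 2 := add_le_add ((hfg n _ (posPart_nonneg _)).trans (htail n k)) (hN n hn)
      _ = ε := add_halves ε

/-- Lemma (1): if A is an almost L-set in E′ and (fₙ) is a sequence in Sol(A) with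
|fₙ| → 0 weak*, then (fₙ) is an L-sequence. -/
theorem lSequence_of_solidHull_almostLSet {E : Type*} [NormedAddCommGroup E] [Lattice E] [HasSolidNorm E] [IsOrderedAddMonoid E] [NormedSpace ℝ E] [CompleteSpace E]
    (A : Set (E →L[ℝ] ℝ)) (hA : AlmostLSet A)
    (f : ℕ → E →L[ℝ] ℝ)
    (hsol : ∀ n, ∃ g ∈ A, DualAbsLE (f n) g)
    (habs : ∀ x : E, 0 ≤ x → Tendsto (fun n => dualAbs (f n) x) atTop (𝓝 0)) :
    IsLSequence f := by
  choose g hgA hfg using hsol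
  intro x hx ε hε
  by_cases htail : ∃ u, 0 ≤ u ∧ ∀ n k, dualAbs (g n) (|x k| - u)⁺ ≤ ε / 2
  · obtain ⟨u, hu, htail⟩ := htail
    obtain ⟨N, hN⟩ :=
      eventually_atTop.1 (eventually_forall_abs_apply_le hfg hx hu (habs u hu) hε htail)
    exact ⟨N, fun k hk _ ⟨n, hn⟩ => hn ▸ hN k hk n⟩
  push Not at htail
  obtain ⟨C, hC⟩ := hx.exists_norm_le
  obtain ⟨κ, ν, v, hκ, hv, hv_disj, hv_big⟩ :=
    exists_pairwise_inf_eq_zero_lt_dualAbs hC (half_pos hε) htail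
  choose y hyv hgy using fun j => exists_lt_apply_of_lt_dualAbs (hv j).1 (hv_big j)
  have hy_disj : Pairwise fun i j => |y i| ⊓ |y j| = 0 := fun i j hij =>
    inf_eq_zero_of_le_of_le (abs_nonneg _) (abs_nonneg _) (hyv i) (hyv j) (hv_disj hij)
  have hy_null : WeaklyNull y :=
    (hx.comp_injective hκ).of_disjoint_of_abs_le hy_disj fun j => (hyv j).trans (hv j).2
  obtain ⟨N, hN⟩ := hA y hy_disj hy_null (ε / 8) (by positivity)
  linarith [hN N le_rfl _ (hgA (ν N)), le_abs_self (g (ν N) (y N)), hgy N]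
end

section
/- If A is a bounded solid subset of a Banach lattice E containing a positive disjoint sequence (x_n) that is not weakly null, then a subsequence of (x_n) is equivalent to the unit vector basis of ℓ¹. -/
open Filter Topology

/-!
Rescaling a functional witnessing that `(xₙ)` is not weakly null gives `g` and a subsequence with
`1 ≤ g (x (φ n))`. For disjoint positive `yᵢ`, splitting the coefficients into positive and
negative parts gives `|∑ αᵢ yᵢ| = ∑ |αᵢ| yᵢ`, so by solidity of the norm
`∑ |αᵢ| ≤ g (∑ |αᵢ| yᵢ) ≤ ‖g‖ ‖∑ αᵢ yᵢ‖`; the upper `ℓ¹` estimate is just boundedness of `A`.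
-/

section LatticeOrderedGroup

variable {E : Type*} [AddCommGroup E] [Lattice E] [IsOrderedAddMonoid E]

theorem nonneg_of_two_pow_nsmul_nonneg {v : E} (k : ℕ) (h : 0 ≤ 2 ^ k • v) : 0 ≤ v := by
  induction k generalizing v with
  | zero => simpa using h
  | succ k ih =>
    rw [pow_succ', mul_nsmul] at h
    exact nsmul_two_semiclosed (ih h)

theorem inf_add_le_inf_add_inf {u v w : E} (hu : 0 ≤ u) (hv : 0 ≤ v) (hw : 0 ≤ w) :
    u ⊓ (v + w) ≤ u ⊓ v + u ⊓ w := by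
  rw [add_inf, inf_add, inf_add]
  refine le_inf (le_inf ?_ ?_) (le_inf ?_ inf_le_right)
  · exact inf_le_left.trans (le_add_of_nonneg_right hu)
  · exact inf_le_left.trans (le_add_of_nonneg_left hv)
  · exact inf_le_left.trans (le_add_of_nonneg_right hw)

theorem inf_sum_eq_zero {ι : Type*} {u : E} {w : ι → E} {s : Finset ι} (hu : 0 ≤ u)
    (hw : ∀ i ∈ s, 0 ≤ w i) (h : ∀ i ∈ s, u ⊓ w i = 0) : u ⊓ ∑ i ∈ s, w i = 0 := by
  induction s using Finset.cons_induction with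
  | empty => simpa using hu
  | cons a s _ ih =>
    rw [Finset.forall_mem_cons] at hw h
    rw [Finset.sum_cons]
    refine le_antisymm ?_ (le_inf hu (add_nonneg hw.1 (Finset.sum_nonneg hw.2)))
    calc u ⊓ (w a + ∑ i ∈ s, w i) ≤ u ⊓ w a + u ⊓ ∑ i ∈ s, w i :=
          inf_add_le_inf_add_inf hu hw.1 (Finset.sum_nonneg hw.2)
      _ = 0 := by rw [h.1, ih hw.2 h.2, add_zero]

theorem abs_sub_eq_add_of_inf_eq_zero {a b : E} (hab : a ⊓ b = 0) :
    |a - b| = a + b := by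
  rw [abs_sub_comm, ← sup_sub_inf_eq_abs_sub, ← inf_add_sup, hab, sub_zero, zero_add]

end LatticeOrderedGroup

section TopologicalLatticeModule

variable {E : Type*} [AddCommGroup E] [Lattice E] [IsOrderedAddMonoid E]
  [TopologicalSpace E] [OrderClosedTopology E] [Module ℝ E] [ContinuousSMul ℝ E]

-- The order and the scalar action are not assumed compatible: positivity of `r • v` comes from
-- the closed positive cone containing every dyadic multiple of `v`.
theorem smul_nonneg_of_orderClosedTopology {r : ℝ} (hr : 0 ≤ r) {v : E} (hv : 0 ≤ v) :
    0 ≤ r • v := by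
  have hdyadic : ∀ m k : ℕ, 0 ≤ ((m : ℝ) / 2 ^ k) • v := by
    intro m k
    have hk : 0 ≤ ((2 : ℝ) ^ k)⁻¹ • v := by
      refine nonneg_of_two_pow_nsmul_nonneg k ?_
      rwa [← Nat.cast_smul_eq_nsmul ℝ, smul_smul, Nat.cast_pow, Nat.cast_ofNat,
        mul_inv_cancel₀ (by positivity), one_smul]
    rw [div_eq_mul_inv, mul_smul, Nat.cast_smul_eq_nsmul]
    exact nsmul_nonneg hk m
  have hlim : Tendsto (fun k : ℕ => (⌊r * 2 ^ k⌋₊ : ℝ) / 2 ^ k) atTop (𝓝 r) :=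
    (tendsto_nat_floor_mul_div_atTop hr).comp (tendsto_pow_atTop_atTop_of_one_lt one_lt_two)
  exact isClosed_Ici.mem_of_tendsto (hlim.smul_const v) (Eventually.of_forall fun k => hdyadic _ k)

instance Real.posSMulMono_of_orderClosedTopology : PosSMulMono ℝ E :=
  PosSMulMono.of_smul_nonneg fun _ hr _ hv => smul_nonneg_of_orderClosedTopology hr hv

end TopologicalLatticeModule

section LatticeModule

variable {E : Type*} [AddCommGroup E] [Lattice E] [IsOrderedAddMonoid E]
  [Module ℝ E] [PosSMulMono ℝ E]

theorem smul_inf_smul_eq_zero {u v : E} (hu : 0 ≤ u) (hv : 0 ≤ v) (huv : u ⊓ v = 0)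
    {r s : ℝ} (hr : 0 ≤ r) (hs : 0 ≤ s) : r • u ⊓ s • v = 0 := by
  have ht : 0 < r + s + 1 := by linarith
  refine le_antisymm ?_ (le_inf (smul_nonneg hr hu) (smul_nonneg hs hv))
  calc r • u ⊓ s • v ≤ (r + s + 1) • u ⊓ (r + s + 1) • v :=
        inf_le_inf (smul_le_smul_of_nonneg_right (by linarith) hu)
          (smul_le_smul_of_nonneg_right (by linarith) hv)
    _ = (r + s + 1) • (u ⊓ v) := ((OrderIso.smulRight ht).map_inf u v).symm
    _ = 0 := by rw [huv, smul_zero]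

theorem abs_sum_smul_eq_sum_abs_smul {ι : Type*} (s : Finset ι) (α : ι → ℝ) {y : ι → E}
    (hy : ∀ i, 0 ≤ y i) (hdisj : Pairwise fun i j => y i ⊓ y j = 0) :
    |∑ i ∈ s, α i • y i| = ∑ i ∈ s, |α i| • y i := by
  set P := ∑ i ∈ s, (α i)⁺ • y i
  set N := ∑ i ∈ s, (α i)⁻ • y i
  have hP : ∀ i, 0 ≤ (α i)⁺ • y i := fun i => smul_nonneg (posPart_nonneg _) (hy i)
  have hN : ∀ i, 0 ≤ (α i)⁻ • y i := fun i => smul_nonneg (negPart_nonneg _) (hy i)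
  have hparts : ∀ i j, (α i)⁺ • y i ⊓ (α j)⁻ • y j = 0 := by
    intro i j
    rcases eq_or_ne i j with rfl | hij
    · rcases le_total 0 (α i) with hα | hα
      · rw [negPart_eq_zero.mpr hα, zero_smul]
        exact inf_of_le_right (hP i)
      · rw [posPart_eq_zero.mpr hα, zero_smul]
        exact inf_of_le_left (hN i)
    · exact smul_inf_smul_eq_zero (hy i) (hy j) (hdisj hij) (posPart_nonneg _) (negPart_nonneg _)
  have hPN : P ⊓ N = 0 := by
    rw [inf_comm]
    refine inf_sum_eq_zero (Finset.sum_nonneg fun j _ => hN j) (fun i _ => hP i) fun i _ => ?_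
    rw [inf_comm]
    exact inf_sum_eq_zero (hP i) (fun j _ => hN j) fun j _ => hparts i j
  calc |∑ i ∈ s, α i • y i| = |P - N| := by
        simp only [P, N, ← Finset.sum_sub_distrib, ← sub_smul, posPart_sub_negPart]
    _ = P + N := abs_sub_eq_add_of_inf_eq_zero hPN
    _ = ∑ i ∈ s, |α i| • y i := by
        simp only [P, N, ← Finset.sum_add_distrib, ← add_smul, posPart_add_negPart]

end LatticeModule

theorem norm_sum_smul_le_of_norm_le {X ι : Type*} [SeminormedAddCommGroup X] [NormedSpace ℝ X]
    {y : ι → X} {M : ℝ} (hy : ∀ i, ‖y i‖ ≤ M) (s : Finset ι) (α : ι → ℝ) :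
    ‖∑ i ∈ s, α i • y i‖ ≤ M * ∑ i ∈ s, |α i| := by
  calc ‖∑ i ∈ s, α i • y i‖ ≤ ∑ i ∈ s, ‖α i • y i‖ := norm_sum_le _ _
    _ ≤ ∑ i ∈ s, M * |α i| := Finset.sum_le_sum fun i _ => by
        rw [norm_smul, Real.norm_eq_abs, mul_comm]
        exact mul_le_mul_of_nonneg_right (hy i) (abs_nonneg _)
    _ = M * ∑ i ∈ s, |α i| := (Finset.mul_sum _ _ _).symm

theorem exists_subseq_one_le_of_not_weaklyNull {X : Type*} [NormedAddCommGroup X]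
    [NormedSpace ℝ X] {x : ℕ → X} (hx : ¬ WeaklyNull x) :
    ∃ g : X →L[ℝ] ℝ, ∃ φ : ℕ → ℕ, StrictMono φ ∧ ∀ n, 1 ≤ g (x (φ n)) := by
  obtain ⟨f, hf⟩ := not_forall.mp hx
  obtain ⟨ε, hε, hfreq⟩ : ∃ ε > 0, ∃ᶠ n in atTop, ε ≤ |f (x n)| := by
    simpa [Metric.tendsto_atTop, frequently_atTop, Real.dist_eq] using hf
  obtain ⟨g, hg⟩ : ∃ g : X →L[ℝ] ℝ, ∃ᶠ n in atTop, 1 ≤ g (x n) := by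
    rcases frequently_or_distrib.mp (hfreq.mono fun n => le_abs'.mp) with h | h
    · exact ⟨ε⁻¹ • -f, h.mono fun n hn => (one_le_inv_mul₀ hε).mpr (le_neg_of_le_neg hn)⟩
    · exact ⟨ε⁻¹ • f, h.mono fun n hn => (one_le_inv_mul₀ hε).mpr hn⟩
  obtain ⟨φ, hφ, hgφ⟩ := extraction_of_frequently_atTop hg
  exact ⟨g, φ, hφ, hgφ⟩

section NormedLattice

variable {E : Type*} [NormedAddCommGroup E] [Lattice E] [HasSolidNorm E] [IsOrderedAddMonoid E]
  [NormedSpace ℝ E]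

theorem sum_abs_le_norm_mul_norm_sum_smul {ι : Type*} {y : ι → E} (hy : ∀ i, 0 ≤ y i)
    (hdisj : Pairwise fun i j => y i ⊓ y j = 0) {g : E →L[ℝ] ℝ} (hg : ∀ i, 1 ≤ g (y i))
    (s : Finset ι) (α : ι → ℝ) :
    ∑ i ∈ s, |α i| ≤ ‖g‖ * ‖∑ i ∈ s, α i • y i‖ :=
  calc ∑ i ∈ s, |α i| ≤ ∑ i ∈ s, |α i| * g (y i) := Finset.sum_le_sum fun i _ =>
        le_mul_of_one_le_right (abs_nonneg _) (hg i)
    _ = g (∑ i ∈ s, |α i| • y i) := by simp only [map_sum, map_smul, smul_eq_mul]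
    _ ≤ ‖g‖ * ‖∑ i ∈ s, |α i| • y i‖ := (le_abs_self _).trans (g.le_opNorm _)
    _ = ‖g‖ * ‖∑ i ∈ s, α i • y i‖ := by
        rw [← abs_sum_smul_eq_sum_abs_smul s α hy hdisj, norm_abs_eq_norm]

theorem equivL1Basis_of_disjoint_of_one_le {y : ℕ → E} {M : ℝ} (hM : ∀ n, ‖y n‖ ≤ M)
    (hy : ∀ n, 0 ≤ y n) (hdisj : Pairwise fun m n => y m ⊓ y n = 0) {g : E →L[ℝ] ℝ}
    (hg : ∀ n, 1 ≤ g (y n)) : EquivL1Basis y := by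
  have hg_pos : 0 < ‖g‖ := norm_pos_iff.mpr fun h => absurd (hg 0) (by simp [h])
  refine ⟨‖g‖⁻¹, M, inv_pos.mpr hg_pos, fun s α => ⟨?_, norm_sum_smul_le_of_norm_le hM s α⟩⟩
  rw [inv_mul_le_iff₀ hg_pos]
  exact sum_abs_le_norm_mul_norm_sum_smul hy hdisj hg s α

end NormedLattice

theorem disjoint_not_weaklyNull_subseq_l1_general {E : Type*} [NormedAddCommGroup E] [Lattice E] [HasSolidNorm E] [IsOrderedAddMonoid E] [NormedSpace ℝ E]
    (A : Set E) (hA : Bornology.IsBounded A)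
    (x : ℕ → E) (hxA : ∀ n, x n ∈ A) (hxpos : ∀ n, 0 ≤ x n)
    (hdisj : Pairwise fun m n => |x m| ⊓ |x n| = 0)
    (hnot : ¬ WeaklyNull x) :
    ∃ φ : ℕ → ℕ, StrictMono φ ∧ EquivL1Basis (fun n => x (φ n)) := by
  obtain ⟨g, φ, hφ, hg⟩ := exists_subseq_one_le_of_not_weaklyNull hnot
  obtain ⟨M, hM⟩ := hA.exists_norm_le
  refine ⟨φ, hφ, equivL1Basis_of_disjoint_of_one_le (fun n => hM _ (hxA _)) (fun n => hxpos _)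
    (fun m n hmn => ?_) hg⟩
  simpa only [abs_of_nonneg (hxpos _)] using hdisj (hφ.injective.ne hmn)

/-- A positive disjoint sequence in a bounded solid set that is not weakly null has a
subsequence equivalent to the unit vector basis of ℓ¹. -/
theorem disjoint_not_weaklyNull_subseq_l1 {E : Type*} [NormedAddCommGroup E] [Lattice E] [HasSolidNorm E] [IsOrderedAddMonoid E] [NormedSpace ℝ E] [CompleteSpace E]
    (A : Set E) (hA : Bornology.IsBounded A)
    (hsolid : ∀ x ∈ A, ∀ y : E, |y| ≤ |x| → y ∈ A)
    (x : ℕ → E) (hxA : ∀ n, x n ∈ A) (hxpos : ∀ n, 0 ≤ x n)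
    (hdisj : Pairwise fun m n => |x m| ⊓ |x n| = 0)
    (hnot : ¬ WeaklyNull x) :
    ∃ φ : ℕ → ℕ, StrictMono φ ∧ EquivL1Basis (fun n => x (φ n)) :=
  disjoint_not_weaklyNull_subseq_l1_general A hA x hxA hxpos hdisj hnot
end
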